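/- arXiv:2101.07416 — 3 statements merged into one kernel-verified Lean document; each statement's English description precedes it below -/
import Mathlib

section
/- Let $l > 0$ and let $\varepsilon$ satisfy $0 \le \varepsilon < 3 - 2\sqrt{2}$ (note $3-2\sqrt{2} = (2-\sqrt{2})/(2+\sqrt{2}) \approx 0.172$). If $a, b \in [(1-\varepsilon)l, (1+\varepsilon)l]$ and $c \in [(1-\varepsilon)\sqrt{2}\,l, (1+\varepsilon)\sqrt{2}\,l]$, then the strict triangle inequalities hold: $a + b > c$, $b + c > a$, and $a + c > b$. -/
/-!
The only binding constraint is that the diagonal never outgrows the two sides: `a + b > c` holds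
as soon as `(1 + ε) √2 < 2 (1 - ε)`, i.e. `ε < (2 - √2) / (2 + √2) = 3 - 2√2`. The other two
inequalities only need `ε < √2 - 1`, which is weaker.
-/

open Set Real

theorem triangle_ineq_of_mem_Icc {lo hi lo' hi' a b c : ℝ}
    (ha : a ∈ Icc lo hi) (hb : b ∈ Icc lo hi) (hc : c ∈ Icc lo' hi')
    (hdiag : hi' < 2 * lo) (hside : hi < lo + lo') :
    a + b > c ∧ b + c > a ∧ a + c > b := by
  obtain ⟨ha₁, ha₂⟩ := ha
  obtain ⟨hb₁, hb₂⟩ := hb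
  obtain ⟨hc₁, hc₂⟩ := hc
  exact ⟨by linarith, by linarith, by linarith⟩

theorem two_add_sqrt_two_mul_three_sub_two_sqrt_two :
    (2 + √2) * (3 - 2 * √2) = 2 - √2 := by
  have hs : √2 ^ 2 = 2 := sq_sqrt zero_le_two
  linear_combination (-2 : ℝ) * hs

theorem three_sub_two_sqrt_two_le_sqrt_two_sub_one : 3 - 2 * √2 ≤ √2 - 1 := by
  nlinarith [sq_sqrt (zero_le_two : (0 : ℝ) ≤ 2), sqrt_nonneg 2]

theorem one_add_mul_sqrt_two_lt_two_mul_one_sub {ε : ℝ} (hε : ε < 3 - 2 * √2) :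
    (1 + ε) * √2 < 2 * (1 - ε) := by
  have hpos : 0 < 2 + √2 := by positivity
  have := mul_lt_mul_of_pos_left hε hpos
  rw [two_add_sqrt_two_mul_three_sub_two_sqrt_two] at this
  linarith

theorem one_add_lt_one_sub_mul_one_add_sqrt_two {ε : ℝ} (hε : ε < 3 - 2 * √2) :
    1 + ε < (1 - ε) * (1 + √2) := by
  have hε' : ε < √2 - 1 := hε.trans_le three_sub_two_sqrt_two_le_sqrt_two_sub_one
  have hs : √2 ^ 2 = 2 := sq_sqrt zero_le_two
  have := mul_lt_mul_of_pos_left hε' (by positivity : (0 : ℝ) < 2 + √2)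
  linear_combination this + hs

theorem stmt_0_general (l ε a b c : ℝ) (hl : 0 < l)
    (hε1 : ε < 3 - 2 * Real.sqrt 2)
    (ha : a ∈ Set.Icc ((1 - ε) * l) ((1 + ε) * l))
    (hb : b ∈ Set.Icc ((1 - ε) * l) ((1 + ε) * l))
    (hc : c ∈ Set.Icc ((1 - ε) * (Real.sqrt 2 * l)) ((1 + ε) * (Real.sqrt 2 * l))) :
    a + b > c ∧ b + c > a ∧ a + c > b := by
  refine triangle_ineq_of_mem_Icc ha hb hc ?_ ?_
  · have := mul_lt_mul_of_pos_right (one_add_mul_sqrt_two_lt_two_mul_one_sub hε1) hl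
    linarith
  · have := mul_lt_mul_of_pos_right (one_add_lt_one_sub_mul_one_add_sqrt_two hε1) hl
    linarith

/-- Under a deformation rate bound `ε < 3 - 2√2`, two side lengths in
`[(1-ε)l, (1+ε)l]` and a diagonal length in `[(1-ε)√2 l, (1+ε)√2 l]`
satisfy the strict triangle inequalities. -/
theorem stmt_0 (l ε a b c : ℝ) (hl : 0 < l) (hε0 : 0 ≤ ε)
    (hε1 : ε < 3 - 2 * Real.sqrt 2)
    (ha : a ∈ Set.Icc ((1 - ε) * l) ((1 + ε) * l))
    (hb : b ∈ Set.Icc ((1 - ε) * l) ((1 + ε) * l))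
    (hc : c ∈ Set.Icc ((1 - ε) * (Real.sqrt 2 * l)) ((1 + ε) * (Real.sqrt 2 * l))) :
    a + b > c ∧ b + c > a ∧ a + c > b :=
  stmt_0_general l ε a b c hl hε1 ha hb hc
end

section
/- Let $l > 0$ and $0 \le \varepsilon < 3 - 2\sqrt{2}$. Let $x_1, x_2, x_3, x_4 \in \mathbb{R}^2$ be four points such that the four side lengths $\|x_1 - x_2\|, \|x_2 - x_3\|, \|x_3 - x_4\|, \|x_4 - x_1\|$ all lie in $[(1-\varepsilon)l, (1+\varepsilon)l]$ and the two diagonal lengths $\|x_1 - x_3\|, \|x_2 - x_4\|$ both lie in $[(1-\varepsilon)\sqrt{2}\,l, (1+\varepsilon)\sqrt{2}\,l]$. Then the four points are in convex position: no point $x_i$ lies in the convex hull of the other three points. -/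
/-!
Distance to a fixed point is convex, so on the convex hull of a set it is maximised at a point of
the set. For `ε < 3 - 2√2` every side, of length at most `(1 + ε) l`, is strictly shorter than
every diagonal, of length at least `(1 - ε) √2 l`. Hence if `x₁` lay in the convex hull of
`x₂, x₃, x₄`, its distance to the opposite vertex `x₃` would be at most a side length, while it is
the length of a diagonal.
-/

open Set

theorem notMem_convexHull_of_forall_dist_lt {E : Type*} [SeminormedAddCommGroup E]
    [NormedSpace ℝ E] {s : Set E} {p : E} (q : E) (h : ∀ y ∈ s, dist y q < dist p q) :
    p ∉ convexHull ℝ s := fun hp =>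
  let ⟨y, hy, hpy⟩ := convexHull_exists_dist_ge hp q
  (h y hy).not_ge hpy

/-- `3 - 2√2 = (√2 - 1) / (√2 + 1)` is exactly the threshold for `(1 + ε) < (1 - ε) √2`. -/
theorem one_add_mul_lt_one_sub_mul_sqrt_two_mul {l ε : ℝ} (hl : 0 < l)
    (hε : ε < 3 - 2 * Real.sqrt 2) :
    (1 + ε) * l < (1 - ε) * (Real.sqrt 2 * l) := by
  have hs2 : Real.sqrt 2 ^ 2 = 2 := Real.sq_sqrt zero_le_two
  have hε' : ε * (Real.sqrt 2 + 1) < Real.sqrt 2 - 1 := by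
    nlinarith [mul_lt_mul_of_pos_right hε (by positivity : 0 < Real.sqrt 2 + 1)]
  nlinarith

theorem stmt_1_general (l ε : ℝ) (hl : 0 < l)
    (hε1 : ε < 3 - 2 * Real.sqrt 2)
    (x₁ x₂ x₃ x₄ : EuclideanSpace ℝ (Fin 2))
    (h12 : ‖x₁ - x₂‖ ∈ Set.Icc ((1 - ε) * l) ((1 + ε) * l))
    (h23 : ‖x₂ - x₃‖ ∈ Set.Icc ((1 - ε) * l) ((1 + ε) * l))
    (h34 : ‖x₃ - x₄‖ ∈ Set.Icc ((1 - ε) * l) ((1 + ε) * l))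
    (h41 : ‖x₄ - x₁‖ ∈ Set.Icc ((1 - ε) * l) ((1 + ε) * l))
    (h13 : ‖x₁ - x₃‖ ∈ Set.Icc ((1 - ε) * (Real.sqrt 2 * l)) ((1 + ε) * (Real.sqrt 2 * l)))
    (h24 : ‖x₂ - x₄‖ ∈ Set.Icc ((1 - ε) * (Real.sqrt 2 * l)) ((1 + ε) * (Real.sqrt 2 * l))) :
    x₁ ∉ convexHull ℝ ({x₂, x₃, x₄} : Set (EuclideanSpace ℝ (Fin 2))) ∧
    x₂ ∉ convexHull ℝ ({x₁, x₃, x₄} : Set (EuclideanSpace ℝ (Fin 2))) ∧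
    x₃ ∉ convexHull ℝ ({x₁, x₂, x₄} : Set (EuclideanSpace ℝ (Fin 2))) ∧
    x₄ ∉ convexHull ℝ ({x₁, x₂, x₃} : Set (EuclideanSpace ℝ (Fin 2))) := by
  set D := (1 - ε) * (Real.sqrt 2 * l)
  have hD : (1 + ε) * l < D := one_add_mul_lt_one_sub_mul_sqrt_two_mul hl hε1
  have side {x y : EuclideanSpace ℝ (Fin 2)} (h : ‖x - y‖ ∈ Icc ((1 - ε) * l) ((1 + ε) * l)) :
      dist x y < D := (dist_eq_norm x y ▸ h.2).trans_lt hD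
  have diag {x y : EuclideanSpace ℝ (Fin 2)} (h : ‖x - y‖ ∈ Icc D ((1 + ε) * (Real.sqrt 2 * l))) :
      D ≤ dist x y := dist_eq_norm x y ▸ h.1
  have s12 := side h12
  have s23 := side h23
  have s34 := side h34
  have s41 := side h41
  have d13 := diag h13
  have d24 := diag h24
  have hD0 : 0 < D := dist_nonneg.trans_lt s12
  simp only [dist_comm] at s12 s23 s34 s41 d13 d24
  refine ⟨notMem_convexHull_of_forall_dist_lt x₃ ?_, notMem_convexHull_of_forall_dist_lt x₄ ?_,
    notMem_convexHull_of_forall_dist_lt x₁ ?_, notMem_convexHull_of_forall_dist_lt x₂ ?_⟩ <;>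
  · simp only [forall_mem_insert, mem_singleton_iff, forall_eq, dist_self, dist_comm]
    refine ⟨?_, ?_, ?_⟩ <;> linarith

/-- Under the deformation bound `ε < 3 - 2√2`, four points in the plane whose
four side lengths are within `(1±ε)l` and whose two diagonals are within
`(1±ε)√2 l` are in convex position: no point lies in the convex hull of the
other three. -/
theorem stmt_1 (l ε : ℝ) (hl : 0 < l) (hε0 : 0 ≤ ε)
    (hε1 : ε < 3 - 2 * Real.sqrt 2)
    (x₁ x₂ x₃ x₄ : EuclideanSpace ℝ (Fin 2))
    (h12 : ‖x₁ - x₂‖ ∈ Set.Icc ((1 - ε) * l) ((1 + ε) * l))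
    (h23 : ‖x₂ - x₃‖ ∈ Set.Icc ((1 - ε) * l) ((1 + ε) * l))
    (h34 : ‖x₃ - x₄‖ ∈ Set.Icc ((1 - ε) * l) ((1 + ε) * l))
    (h41 : ‖x₄ - x₁‖ ∈ Set.Icc ((1 - ε) * l) ((1 + ε) * l))
    (h13 : ‖x₁ - x₃‖ ∈ Set.Icc ((1 - ε) * (Real.sqrt 2 * l)) ((1 + ε) * (Real.sqrt 2 * l)))
    (h24 : ‖x₂ - x₄‖ ∈ Set.Icc ((1 - ε) * (Real.sqrt 2 * l)) ((1 + ε) * (Real.sqrt 2 * l))) :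
    x₁ ∉ convexHull ℝ ({x₂, x₃, x₄} : Set (EuclideanSpace ℝ (Fin 2))) ∧
    x₂ ∉ convexHull ℝ ({x₁, x₃, x₄} : Set (EuclideanSpace ℝ (Fin 2))) ∧
    x₃ ∉ convexHull ℝ ({x₁, x₂, x₄} : Set (EuclideanSpace ℝ (Fin 2))) ∧
    x₄ ∉ convexHull ℝ ({x₁, x₂, x₃} : Set (EuclideanSpace ℝ (Fin 2))) :=
  stmt_1_general l ε hl hε1 x₁ x₂ x₃ x₄ h12 h23 h34 h41 h13 h24
end

section
/- Let $K > 0$, let $C : \mathbb{R}^n \times \mathbb{R} \to \mathbb{R}^n$ be continuously differentiable, and let $p : \mathbb{R} \to \mathbb{R}^n$ be a differentiable trajectory satisfying $\big(I - \frac{\partial C}{\partial p}(p(t),t)\big)\dot{p}(t) = K\big(C(p(t),t) - p(t)\big) + \frac{\partial C}{\partial t}(p(t),t)$ for all $t \ge 0$ (which holds in particular for the control law $\dot{p} = (I - \frac{\partial C}{\partial p})^{-1}(K(C(p,t)-p) + \frac{\partial C}{\partial t})$ whenever $I - \frac{\partial C}{\partial p}$ is invertible along the trajectory). Then the error $e(t)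 = C(p(t),t) - p(t)$ satisfies $\dot{e}(t) = -K e(t)$, hence $e(t) = e^{-Kt} e(0)$ and $\|C(p(t),t) - p(t)\|$ converges to zero exponentially with rate $K$. -/
/-!
By the chain rule, `e(t) = C(p(t), t) - p(t)` has derivative `∂C/∂p ṗ + ∂C/∂t - ṗ`, which the
control law turns into `-K e`. Then `e^{Kt} e(t)` has zero derivative on `[0, ∞)`, so
`e(t) = e^{-Kt} e(0)`, which tends to zero since `K > 0`.
-/

open Real Filter Topology

theorem hasDerivAt_uncurry_comp_prodMk {E F : Type*} [NormedAddCommGroup E] [NormedSpace ℝ E]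
    [NormedAddCommGroup F] [NormedSpace ℝ F] {C : E → ℝ → F} {p : ℝ → E} {v : E} {t : ℝ}
    (hC : DifferentiableAt ℝ (fun q : E × ℝ => C q.1 q.2) (p t, t)) (hp : HasDerivAt p v t) :
    HasDerivAt (fun s => C (p s) s)
      (fderiv ℝ (fun q => C q t) (p t) v + deriv (fun s => C (p t) s) t) t := by
  set L := fderiv ℝ (fun q : E × ℝ => C q.1 q.2) (p t, t)
  have hL : HasFDerivAt (fun q : E × ℝ => C q.1 q.2) L (p t, t) := hC.hasFDerivAt
  have hx : fderiv ℝ (fun q => C q t) (p t) = L.comp (.inl ℝ E ℝ) :=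
    (hL.comp (p t) (hasFDerivAt_prodMk_left (𝕜 := ℝ) (p t) t) :).fderiv
  have hs : deriv (fun s => C (p t) s) t = L (0, 1) :=
    (hL.comp_hasDerivAt t ((hasDerivAt_const t (p t)).prodMk (hasDerivAt_id t))).deriv
  have hv : L (v, 1) = L.comp (.inl ℝ E ℝ) v + L (0, 1) := by
    rw [L.comp_apply, ContinuousLinearMap.inl_apply, ← map_add, Prod.mk_add_mk, add_zero, zero_add]
  rw [hx, hs, ← hv]
  exact hL.comp_hasDerivAt (f := fun s => (p s, s)) t (hp.prodMk (hasDerivAt_id t))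

theorem eq_exp_smul_of_hasDerivAt_neg_smul {E : Type*} [NormedAddCommGroup E] [NormedSpace ℝ E]
    {f : ℝ → E} {c : ℝ} (hf : ∀ t, 0 ≤ t → HasDerivAt f (-(c • f t)) t) {t : ℝ} (ht : 0 ≤ t) :
    f t = exp (-c * t) • f 0 := by
  have hg : ∀ s, 0 ≤ s → HasDerivAt (fun s => exp (c * s) • f s) 0 s := by
    intro s hs
    have hexp : HasDerivAt (fun s => exp (c * s)) (exp (c * s) * c) s := by
      simpa using ((hasDerivAt_id s).const_mul c).exp
    refine (hexp.smul (hf s hs)).congr_deriv ?_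
    rw [smul_neg, smul_smul]
    module
  have hconst := constant_of_has_deriv_right_zero (a := 0) (b := t)
    (fun s hs => (hg s hs.1).continuousAt.continuousWithinAt)
    (fun s hs => (hg s hs.1).hasDerivWithinAt) t ⟨ht, le_rfl⟩
  rw [mul_zero, exp_zero, one_smul] at hconst
  rw [← hconst, smul_smul, ← exp_add, neg_mul, neg_add_cancel, exp_zero, one_smul]

theorem tendsto_exp_neg_mul_smul_atTop {E : Type*} [NormedAddCommGroup E] [NormedSpace ℝ E]
    {c : ℝ} (hc : 0 < c) (v : E) :
    Tendsto (fun t => exp (-c * t) • v) atTop (𝓝 0) := by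
  have h := (tendsto_exp_neg_atTop_nhds_zero.comp (tendsto_id.const_mul_atTop hc)).smul_const v
  simpa [Function.comp_def, neg_mul] using h

/-- Exponential convergence to a centroidal configuration: if the trajectory
`p` satisfies `(I - ∂C/∂p)ṗ = K(C(p,t) - p) + ∂C/∂t`, then the error
`e = C(p,t) - p` satisfies `ė = -K e`, hence `e(t) = e^{-Kt} e(0)` and
`‖C(p(t),t) - p(t)‖ → 0` exponentially with rate `K`. -/
theorem stmt_8 (n : ℕ) (K : ℝ) (hK : 0 < K)
    (C : EuclideanSpace ℝ (Fin n) → ℝ → EuclideanSpace ℝ (Fin n))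
    (hC : ContDiff ℝ 1 (fun q : EuclideanSpace ℝ (Fin n) × ℝ => C q.1 q.2))
    (p p' : ℝ → EuclideanSpace ℝ (Fin n))
    (hp : ∀ t, HasDerivAt p (p' t) t)
    (hlaw : ∀ t, 0 ≤ t →
      p' t - fderiv ℝ (fun q => C q t) (p t) (p' t)
        = K • (C (p t) t - p t) + deriv (fun s => C (p t) s) t) :
    (∀ t, 0 ≤ t →
      HasDerivAt (fun s => C (p s) s - p s) (-(K • (C (p t) t - p t))) t) ∧
    (∀ t, 0 ≤ t → C (p t) t - p t = Real.exp (-K * t) • (C (p 0) 0 - p 0)) ∧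
    Filter.Tendsto (fun t => ‖C (p t) t - p t‖) Filter.atTop (nhds 0) := by
  have herr : ∀ t, 0 ≤ t →
      HasDerivAt (fun s => C (p s) s - p s) (-(K • (C (p t) t - p t))) t := by
    intro t ht
    have hCp := hasDerivAt_uncurry_comp_prodMk ((hC.differentiable one_ne_zero) _) (hp t)
    refine (hCp.sub (hp t)).congr_deriv ?_
    linear_combination (norm := module) -(hlaw t ht)
  have hsol := fun t (ht : 0 ≤ t) => eq_exp_smul_of_hasDerivAt_neg_smul herr ht
  refine ⟨herr, hsol, ?_⟩
  have hlim := (tendsto_exp_neg_mul_smul_atTop hK (C (p 0) 0 - p 0)).norm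
  rw [norm_zero] at hlim
  exact hlim.congr' (by filter_upwards [eventually_ge_atTop 0] with t ht; rw [hsol t ht])
end
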